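/- Let G be a finite graph with at least one edge and let r ≥ 2 be an integer. Let G' be the graph obtained from G as follows: on the vertex set V(G), put an edge between every pair of distinct vertices (so V(G) induces a clique in G'); for each edge v_i v_j of G and each p ∈ {1,2}, add a new vertex x^p_{ij} adjacent to both v_i and v_j, and attach to x^p_{ij} a new path of length r−1 (with new vertices, distinct for distinct pairs (i,j,p)). Then γ_r(G') = τ(G), and every minimum vertex cover of G is a minimum distance-r dominating set of G'. -/

import Mathlib

/-!
A vertex cover `C` of `G`, sitting inside the clique of `G'`, `r`-dominates `G'`: a clique vertex
is within distance `1` of `C`, and the `i`-th vertex of a pendant path of the edge `e` is within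
distance `i + 1 ≤ r` of an endpoint of `e` lying in `C`. Conversely, the `r`-ball around the far
end of the pendant path at `x⁰_e` consists of that path and the two endpoints of `e`. Hence
sending every new vertex of `G'` to an endpoint of its edge maps any distance-`r` dominating set of
`G'` onto a vertex cover of `G` that is no larger.
-/

/-- `D` is a distance-`r` dominating set of `G`. -/
def IsDrDS {V : Type*} (G : SimpleGraph V) (r : ℕ) (D : Set V) : Prop :=
  ∀ v : V, ∃ u ∈ D, G.Reachable u v ∧ G.dist u v ≤ r

/-- `γ_r(G)`: the minimum size of a distance-`r` dominating set of `G`. -/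
noncomputable def gammaR {V : Type*} (G : SimpleGraph V) (r : ℕ) : ℕ :=
  sInf {n | ∃ D : Set V, IsDrDS G r D ∧ D.ncard = n}

/-- `C` is a vertex cover of `G`. -/
def IsVC {V : Type*} (G : SimpleGraph V) (C : Set V) : Prop :=
  ∀ u v : V, G.Adj u v → u ∈ C ∨ v ∈ C

/-- `τ(G)`: the minimum size of a vertex cover of `G`. -/
noncomputable def tau {V : Type*} (G : SimpleGraph V) : ℕ :=
  sInf {n | ∃ C : Set V, IsVC G C ∧ C.ncard = n}

/-- Index type for the edges of `G`: each edge is recorded as its ordered pair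
of endpoints `(u, v)` with `u < v`. -/
abbrev EdgeIdx {V : Type*} [LinearOrder V] (G : SimpleGraph V) : Type _ :=
  {p : V × V // G.Adj p.1 p.2 ∧ p.1 < p.2}

/-- Vertex type of the graph `G'`: the original vertices of `G` (which will
form a clique), together with, for each edge `e` of `G` and each `s : Fin 2`,
a vertex `x^s_e = (e, s, 0)` adjacent to both endpoints of `e`, carrying an
attached pendant path `(e, s, 0), (e, s, 1), …, (e, s, r - 1)` of length
`r - 1`. -/
abbrev VPrime {V : Type*} [LinearOrder V] (G : SimpleGraph V) (r : ℕ) : Type _ :=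
  V ⊕ (EdgeIdx G × Fin 2 × Fin r)

/-- The base (one-directional) adjacency relation of `G'`. -/
def relPrime {V : Type*} [LinearOrder V] (G : SimpleGraph V) (r : ℕ) :
    VPrime G r → VPrime G r → Prop := fun p q =>
  -- the original vertices form a clique
  (∃ a b : V, a ≠ b ∧ p = Sum.inl a ∧ q = Sum.inl b) ∨
  -- `x^s_e` is adjacent to the first endpoint of `e`
  (∃ (e : EdgeIdx G) (s : Fin 2) (i : Fin r), (i : ℕ) = 0 ∧
      p = Sum.inl e.1.1 ∧ q = Sum.inr (e, s, i)) ∨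
  -- `x^s_e` is adjacent to the second endpoint of `e`
  (∃ (e : EdgeIdx G) (s : Fin 2) (i : Fin r), (i : ℕ) = 0 ∧
      p = Sum.inl e.1.2 ∧ q = Sum.inr (e, s, i)) ∨
  -- the pendant path of length `r - 1` attached to `x^s_e`
  (∃ (e : EdgeIdx G) (s : Fin 2) (i j : Fin r), (j : ℕ) = (i : ℕ) + 1 ∧
      p = Sum.inr (e, s, i) ∧ q = Sum.inr (e, s, j))

/-- The graph `G'` of the construction. -/
def GPrime {V : Type*} [LinearOrder V] (G : SimpleGraph V) (r : ℕ) :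
    SimpleGraph (VPrime G r) :=
  SimpleGraph.fromRel (relPrime G r)

open SimpleGraph

theorem SimpleGraph.Walk.le_add_length {V : Type*} {G : SimpleGraph V} {f : V → ℕ}
    (hf : ∀ a b, G.Adj a b → f a ≤ f b + 1) {u v : V} (p : G.Walk u v) :
    f u ≤ f v + p.length := by
  induction p with
  | nil => simp
  | cons h _ ih => have := hf _ _ h; rw [length_cons]; omega

theorem SimpleGraph.Reachable.le_add_dist {V : Type*} {G : SimpleGraph V} {f : V → ℕ}
    (hf : ∀ a b, G.Adj a b → f a ≤ f b + 1) {u v : V} (h : G.Reachable u v) :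
    f u ≤ f v + G.dist u v := by
  obtain ⟨p, hp⟩ := h.exists_walk_length_eq_dist
  exact hp ▸ p.le_add_length hf

section Minimum

variable {V : Type*} (G : SimpleGraph V)

theorem exists_isVC_ncard_eq_tau : ∃ C : Set V, IsVC G C ∧ C.ncard = tau G :=
  Nat.sInf_mem (s := {n | ∃ C : Set V, IsVC G C ∧ C.ncard = n})
    ⟨_, Set.univ, fun _ _ _ => Or.inl trivial, rfl⟩

theorem exists_isDrDS_ncard_eq_gammaR (r : ℕ) :
    ∃ D : Set V, IsDrDS G r D ∧ D.ncard = gammaR G r :=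
  Nat.sInf_mem (s := {n | ∃ D : Set V, IsDrDS G r D ∧ D.ncard = n})
    ⟨_, Set.univ, fun v => ⟨v, trivial, .refl v, by simp⟩, rfl⟩

variable {G}

theorem tau_le_ncard {C : Set V} (hC : IsVC G C) : tau G ≤ C.ncard :=
  Nat.sInf_le ⟨C, hC, rfl⟩

theorem gammaR_le_ncard {r : ℕ} {D : Set V} (hD : IsDrDS G r D) : gammaR G r ≤ D.ncard :=
  Nat.sInf_le ⟨D, hD, rfl⟩

theorem IsVC.nonempty {C : Set V} (hC : IsVC G C) {a b : V} (hab : G.Adj a b) : C.Nonempty :=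
  (hC a b hab).elim (⟨a, ·⟩) (⟨b, ·⟩)

theorem isVC_of_forall_edgeIdx [LinearOrder V] {C : Set V}
    (hC : ∀ e : EdgeIdx G, e.1.1 ∈ C ∨ e.1.2 ∈ C) : IsVC G C := by
  intro a b hab
  rcases lt_or_gt_of_ne hab.ne with h | h
  · exact hC ⟨(a, b), hab, h⟩
  · exact (hC ⟨(b, a), hab.symm, h⟩).symm

end Minimum

namespace GPrime

variable {V : Type*} [LinearOrder V] {G : SimpleGraph V} {r : ℕ}

theorem adj_inl_inl {a b : V} (h : a ≠ b) : (GPrime G r).Adj (Sum.inl a) (Sum.inl b) :=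
  ⟨by simpa using h, Or.inl <| Or.inl ⟨a, b, h, rfl, rfl⟩⟩

theorem adj_inl_inr_zero (e : EdgeIdx G) (s : Fin 2) {u : V} (hu : u = e.1.1 ∨ u = e.1.2)
    (hr : 0 < r) : (GPrime G r).Adj (Sum.inl u) (Sum.inr (e, s, ⟨0, hr⟩)) := by
  refine ⟨by simp, Or.inl <| Or.inr ?_⟩
  rcases hu with rfl | rfl
  · exact Or.inl ⟨e, s, _, rfl, rfl, rfl⟩
  · exact Or.inr <| Or.inl ⟨e, s, _, rfl, rfl, rfl⟩

theorem adj_inr_succ (e : EdgeIdx G) (s : Fin 2) {n : ℕ} (hn : n + 1 < r) :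
    (GPrime G r).Adj (Sum.inr (e, s, ⟨n, by omega⟩)) (Sum.inr (e, s, ⟨n + 1, hn⟩)) :=
  ⟨by simp, Or.inl <| Or.inr <| Or.inr <| Or.inr ⟨e, s, _, _, rfl, rfl, rfl⟩⟩

theorem exists_walk_inl_inr (e : EdgeIdx G) (s : Fin 2) {u : V} (hu : u = e.1.1 ∨ u = e.1.2) :
    ∀ (n : ℕ) (hn : n < r), ∃ p : (GPrime G r).Walk (Sum.inl u) (Sum.inr (e, s, ⟨n, hn⟩)),
      p.length = n + 1
  | 0, hn => ⟨(adj_inl_inr_zero e s hu hn).toWalk, rfl⟩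
  | n + 1, hn =>
    have ⟨p, hp⟩ := exists_walk_inl_inr e s hu n (by omega)
    ⟨p.concat (adj_inr_succ e s hn), by rw [Walk.length_concat, hp]⟩

theorem isDrDS_image_inl {C : Set V} (hC : IsVC G C) (hne : C.Nonempty) (hr : 0 < r) :
    IsDrDS (GPrime G r) r (Sum.inl '' C) := by
  rintro (a | ⟨e, s, n, hn⟩)
  · obtain ⟨c, hc⟩ := hne
    by_cases hca : c = a
    · exact ⟨Sum.inl c, ⟨c, hc, rfl⟩, by rw [hca], by simp [hca]⟩
    · have hadj := adj_inl_inl (G := G) (r := r) hca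
      exact ⟨Sum.inl c, ⟨c, hc, rfl⟩, hadj.reachable,
        (dist_eq_one_iff_adj.mpr hadj).le.trans hr⟩
  · obtain ⟨u, hu, hue⟩ : ∃ u ∈ C, u = e.1.1 ∨ u = e.1.2 := by
      rcases hC _ _ e.2.1 with h | h
      exacts [⟨_, h, Or.inl rfl⟩, ⟨_, h, Or.inr rfl⟩]
    obtain ⟨p, hp⟩ := exists_walk_inl_inr e s hue n hn
    exact ⟨Sum.inl u, ⟨u, hu, rfl⟩, p.reachable, (dist_le p).trans (by omega)⟩

/-- The vertex of `G` that a vertex of `G'` projects to: new vertices go to the smaller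
endpoint of their edge. -/
def toBase : VPrime G r → V :=
  Sum.elim id fun q => q.1.1.1

variable (r) in
/-- A lower bound for the distance to the far end `(e, 0, r - 1)` of the pendant path at `x⁰_e`
that changes by at most `1` along edges: exact on that path and at the endpoints of `e`, and
`r + 1` elsewhere. -/
def tailPotential (e : EdgeIdx G) : VPrime G r → ℕ
  | Sum.inl v => if v = e.1.1 ∨ v = e.1.2 then r else r + 1
  | Sum.inr (e', s, i) => if e' = e ∧ s = 0 then r - 1 - i else r + 1

theorem tailPotential_le_add_one_of_relPrime (e : EdgeIdx G) {a b : VPrime G r}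
    (h : relPrime G r a b) :
    tailPotential r e a ≤ tailPotential r e b + 1 ∧
      tailPotential r e b ≤ tailPotential r e a + 1 := by
  rcases h with ⟨x, y, -, rfl, rfl⟩ | ⟨e', s, i, hi, rfl, rfl⟩ | ⟨e', s, i, hi, rfl, rfl⟩ |
      ⟨e', s, i, j, hj, rfl, rfl⟩ <;>
    simp only [tailPotential] <;> split_ifs <;> simp_all <;> omega

theorem tailPotential_le_add_one_of_adj (e : EdgeIdx G) (a b : VPrime G r)
    (h : (GPrime G r).Adj a b) : tailPotential r e a ≤ tailPotential r e b + 1 := by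
  rcases (SimpleGraph.fromRel_adj _ _ _).mp h |>.2 with h | h
  exacts [(tailPotential_le_add_one_of_relPrime e h).1,
    (tailPotential_le_add_one_of_relPrime e h).2]

theorem toBase_eq_of_tailPotential_le (e : EdgeIdx G) {u : VPrime G r}
    (hu : tailPotential r e u ≤ r) : toBase u = e.1.1 ∨ toBase u = e.1.2 := by
  rcases u with v | ⟨e', s, i⟩ <;> simp only [tailPotential] at hu <;> split_ifs at hu with h
  · exact h
  · omega
  · exact .inl (by rw [← h.1]; rfl)
  · omega

theorem toBase_eq_of_dist_le (e : EdgeIdx G) (hr : 0 < r) {u : VPrime G r}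
    (hreach : (GPrime G r).Reachable u (Sum.inr (e, 0, ⟨r - 1, by omega⟩)))
    (hdist : (GPrime G r).dist u (Sum.inr (e, 0, ⟨r - 1, by omega⟩)) ≤ r) :
    toBase u = e.1.1 ∨ toBase u = e.1.2 := by
  refine toBase_eq_of_tailPotential_le e ?_
  have hend : tailPotential r e (Sum.inr (e, 0, ⟨r - 1, by omega⟩)) = 0 := by
    simp [tailPotential]
  have := hreach.le_add_dist (tailPotential_le_add_one_of_adj e)
  omega

theorem isVC_image_toBase {D : Set (VPrime G r)} (hD : IsDrDS (GPrime G r) r D) (hr : 0 < r) :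
    IsVC G (toBase '' D) := by
  refine isVC_of_forall_edgeIdx fun e => ?_
  obtain ⟨u, hu, hreach, hdist⟩ := hD (Sum.inr (e, 0, ⟨r - 1, by omega⟩))
  rcases toBase_eq_of_dist_le e hr hreach hdist with h | h
  exacts [.inl ⟨u, hu, h⟩, .inr ⟨u, hu, h⟩]

theorem gammaR_le_tau {a b : V} (hab : G.Adj a b) (hr : 0 < r) :
    gammaR (GPrime G r) r ≤ tau G := by
  obtain ⟨C, hC, hCcard⟩ := exists_isVC_ncard_eq_tau G
  calc gammaR (GPrime G r) r ≤ (Sum.inl '' C : Set (VPrime G r)).ncard :=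
        gammaR_le_ncard (isDrDS_image_inl hC (hC.nonempty hab) hr)
    _ = tau G := by rw [Set.ncard_image_of_injective _ Sum.inl_injective, hCcard]

theorem tau_le_gammaR [Finite V] (hr : 0 < r) : tau G ≤ gammaR (GPrime G r) r := by
  obtain ⟨D, hD, hDcard⟩ := exists_isDrDS_ncard_eq_gammaR (GPrime G r) r
  calc tau G ≤ (toBase '' D).ncard := tau_le_ncard (isVC_image_toBase hD hr)
    _ ≤ D.ncard := Set.ncard_image_le D.toFinite
    _ = gammaR (GPrime G r) r := hDcard

end GPrime

theorem stmt19 {V : Type*} [Fintype V] [LinearOrder V] (G : SimpleGraph V)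
    (hedge : ∃ a b : V, G.Adj a b)
    (r : ℕ) (hr : 2 ≤ r) :
    gammaR (GPrime G r) r = tau G ∧
    ∀ C : Set V, IsVC G C → C.ncard = tau G →
      IsDrDS (GPrime G r) r (Sum.inl '' C) ∧
      (Sum.inl '' C : Set (VPrime G r)).ncard = gammaR (GPrime G r) r := by
  obtain ⟨a, b, hab⟩ := hedge
  have hr₀ : 0 < r := by omega
  have heq := le_antisymm (GPrime.gammaR_le_tau hab hr₀) (GPrime.tau_le_gammaR hr₀)
  refine ⟨heq, fun C hC hCcard => ⟨?_, ?_⟩⟩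
  · exact GPrime.isDrDS_image_inl hC (hC.nonempty hab) hr₀
  · rw [Set.ncard_image_of_injective _ Sum.inl_injective, hCcard, heq]
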